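/- Let X be a nontrivial real Banach space with topological dual X* equipped with the operator norm, and let n ≥ 2 be an integer. Then C̲_NJ^{(n)}(X) ≥ 1 / C̄_NJ^{(n)}(X*). -/

import Mathlib

/-
Given x₁, …, xₙ, pick by Hahn–Banach functionals fⱼ with ‖fⱼ‖ = ‖xⱼ‖ and
fⱼ xⱼ = ‖xⱼ‖². Averaged over all sign patterns θ, the cross terms of
(f₁ + ∑ θⱼ fⱼ)(x₁ + ∑ θⱼ xⱼ) cancel, leaving ∑ ‖xⱼ‖². Bounding each pairing by the product of
norms and applying Cauchy–Schwarz to the sum over θ gives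
1 ≤ C⁽ⁿ⁾(f₁, …, fₙ) · C⁽ⁿ⁾(x₁, …, xₙ) ≤ C̄_NJ⁽ⁿ⁾(X*) · C⁽ⁿ⁾(x₁, …, xₙ).
-/

open Finset MeasureTheory

noncomputable def njRatio {X : Type*} [NormedAddCommGroup X] [NormedSpace ℝ X]
    {m : ℕ} (x0 : X) (y : Fin m → X) : ℝ :=
  (∑ ε : Fin m → Bool, ‖x0 + ∑ j, (if ε j then (1 : ℝ) else -1) • y j‖ ^ 2) /
    (2 ^ m * (‖x0‖ ^ 2 + ∑ j, ‖y j‖ ^ 2))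

noncomputable def upperNJ (X : Type*) [NormedAddCommGroup X] [NormedSpace ℝ X] (n : ℕ) : ℝ :=
  sSup {c : ℝ | ∃ (x0 : X) (y : Fin (n - 1) → X),
    0 < ‖x0‖ ^ 2 + ∑ j, ‖y j‖ ^ 2 ∧ c = njRatio x0 y}

noncomputable def lowerNJ (X : Type*) [NormedAddCommGroup X] [NormedSpace ℝ X] (n : ℕ) : ℝ :=
  sInf {c : ℝ | ∃ (x0 : X) (y : Fin (n - 1) → X),
    0 < ‖x0‖ ^ 2 + ∑ j, ‖y j‖ ^ 2 ∧ c = njRatio x0 y}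

noncomputable def upperMNJ (X : Type*) [NormedAddCommGroup X] [NormedSpace ℝ X] (n : ℕ) : ℝ :=
  sSup {c : ℝ | ∃ (x0 : X) (y : Fin (n - 1) → X),
    ‖x0‖ = 1 ∧ (∀ j, ‖y j‖ = 1) ∧ c = njRatio x0 y}

noncomputable def lowerMNJ (X : Type*) [NormedAddCommGroup X] [NormedSpace ℝ X] (n : ℕ) : ℝ :=
  sInf {c : ℝ | ∃ (x0 : X) (y : Fin (n - 1) → X),
    ‖x0‖ = 1 ∧ (∀ j, ‖y j‖ = 1) ∧ c = njRatio x0 y}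

section SignedSum

variable {E : Type*} [AddCommGroup E] [Module ℝ E] {m : ℕ}

def signedSum (x0 : E) (y : Fin m → E) (ε : Fin m → Bool) : E :=
  x0 + ∑ j, (if ε j then (1 : ℝ) else -1) • y j

theorem signedSum_cons (x0 : E) (y : Fin (m + 1) → E) (b : Bool) (ε : Fin m → Bool) :
    signedSum x0 y (Fin.cons b ε) =
      signedSum (x0 + (if b then (1 : ℝ) else -1) • y 0) (Fin.tail y) ε := by
  simp only [signedSum, Fin.sum_univ_succ, Fin.cons_zero, Fin.cons_succ, Fin.tail, add_assoc]

theorem sum_pi_fin_succ {α M : Type*} [Fintype α] [AddCommMonoid M]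
    (f : (Fin (m + 1) → α) → M) : ∑ ε, f ε = ∑ a, ∑ ε : Fin m → α, f (Fin.cons a ε) := by
  rw [← Fintype.sum_prod_type']
  exact (Fintype.sum_equiv (Fin.consEquiv fun _ => α) _ _ fun _ => rfl).symm

theorem sum_bilin_signedSum {F G : Type*} [AddCommGroup F] [Module ℝ F] [AddCommGroup G]
    [Module ℝ G] (B : E →ₗ[ℝ] F →ₗ[ℝ] G) (x0 : E) (y : Fin m → E) (g0 : F) (g : Fin m → F) :
    ∑ ε, B (signedSum x0 y ε) (signedSum g0 g ε) =
      (2 ^ m : ℝ) • (B x0 g0 + ∑ j, B (y j) (g j)) := by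
  induction m generalizing x0 g0 with
  | zero => simp [signedSum]
  | succ m ih =>
    simp only [sum_pi_fin_succ, signedSum_cons, ih, Fintype.sum_bool, Fin.sum_univ_succ,
      map_add, map_smul, LinearMap.add_apply, LinearMap.smul_apply, Fin.tail, if_true,
      Bool.false_eq_true, if_false]
    module

end SignedSum

theorem sq_add_sum_le {m : ℕ} (a : ℝ) (b : Fin m → ℝ) :
    (a + ∑ j, b j) ^ 2 ≤ (m + 1) * (a ^ 2 + ∑ j, b j ^ 2) := by
  simpa [Fin.sum_univ_succ] using sq_sum_le_card_mul_sum_sq (s := univ) (f := Fin.cons a b)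

section NJRatio

variable {X : Type*} [NormedAddCommGroup X] [NormedSpace ℝ X] {m : ℕ}

theorem njRatio_eq (x0 : X) (y : Fin m → X) :
    njRatio x0 y = (∑ ε, ‖signedSum x0 y ε‖ ^ 2) / (2 ^ m * (‖x0‖ ^ 2 + ∑ j, ‖y j‖ ^ 2)) :=
  rfl

theorem njRatio_nonneg (x0 : X) (y : Fin m → X) : 0 ≤ njRatio x0 y := by
  rw [njRatio_eq]
  positivity

theorem norm_signedSum_le (x0 : X) (y : Fin m → X) (ε : Fin m → Bool) :
    ‖signedSum x0 y ε‖ ≤ ‖x0‖ + ∑ j, ‖y j‖ := by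
  refine (norm_add_le _ _).trans (add_le_add_right ((norm_sum_le _ _).trans ?_) _)
  gcongr with j
  rw [norm_smul]
  split_ifs <;> simp

theorem njRatio_le (x0 : X) (y : Fin m → X) : njRatio x0 y ≤ m + 1 := by
  rw [njRatio_eq]
  refine div_le_of_le_mul₀ (by positivity) (by positivity) ?_
  calc ∑ ε, ‖signedSum x0 y ε‖ ^ 2
      ≤ ∑ _ε : Fin m → Bool, (m + 1) * (‖x0‖ ^ 2 + ∑ j, ‖y j‖ ^ 2) := by
        gcongr with ε
        exact (pow_le_pow_left₀ (norm_nonneg _) (norm_signedSum_le x0 y ε) 2).trans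
          (sq_add_sum_le _ _)
    _ = (m + 1) * (2 ^ m * (‖x0‖ ^ 2 + ∑ j, ‖y j‖ ^ 2)) := by
        rw [sum_const, card_univ, Fintype.card_fun, Fintype.card_bool, Fintype.card_fin,
          nsmul_eq_mul, Nat.cast_pow, Nat.cast_ofNat]
        ring

theorem njRatio_le_upperNJ {n : ℕ} {x0 : X} {y : Fin (n - 1) → X}
    (h : 0 < ‖x0‖ ^ 2 + ∑ j, ‖y j‖ ^ 2) : njRatio x0 y ≤ upperNJ X n :=
  le_csSup ⟨(n - 1 : ℕ) + 1, by rintro _ ⟨a, b, -, rfl⟩; exact njRatio_le a b⟩ ⟨x0, y, h, rfl⟩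

theorem exists_dual_norm_eq_apply_eq_sq [Nontrivial X] (x : X) :
    ∃ g : StrongDual ℝ X, ‖g‖ = ‖x‖ ∧ g x = ‖x‖ ^ 2 := by
  obtain ⟨f, hf, hfx⟩ := exists_dual_vector' ℝ x
  exact ⟨‖x‖ • f, by rw [norm_smul, hf, norm_norm, mul_one], by simp [hfx, sq]⟩

theorem one_le_njRatio_mul_njRatio {x0 : X} {y : Fin m → X} {g0 : StrongDual ℝ X}
    {g : Fin m → StrongDual ℝ X} (hS : 0 < ‖x0‖ ^ 2 + ∑ j, ‖y j‖ ^ 2)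
    (hg0 : ‖g0‖ = ‖x0‖) (hg : ∀ j, ‖g j‖ = ‖y j‖)
    (hg0x : g0 x0 = ‖x0‖ ^ 2) (hgy : ∀ j, g j (y j) = ‖y j‖ ^ 2) :
    1 ≤ njRatio g0 g * njRatio x0 y := by
  set S := ‖x0‖ ^ 2 + ∑ j, ‖y j‖ ^ 2 with hSdef
  have hD : 0 < 2 ^ m * S := by positivity
  have hSg : ‖g0‖ ^ 2 + ∑ j, ‖g j‖ ^ 2 = S := by simp only [hg0, hg, S]
  have hpair : ∑ ε, signedSum g0 g ε (signedSum x0 y ε) = 2 ^ m * S := by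
    simpa [hg0x, hgy] using sum_bilin_signedSum (topDualPairing ℝ X) g0 g x0 y
  have hCS : (2 ^ m * S) ^ 2 ≤
      (∑ ε, ‖signedSum g0 g ε‖ ^ 2) * ∑ ε, ‖signedSum x0 y ε‖ ^ 2 := calc
    (2 ^ m * S) ^ 2 ≤ (∑ ε, ‖signedSum g0 g ε‖ * ‖signedSum x0 y ε‖) ^ 2 := by
      refine pow_le_pow_left₀ hD.le ?_ 2
      rw [← hpair]
      exact sum_le_sum fun ε _ => (Real.le_norm_self _).trans (ContinuousLinearMap.le_opNorm _ _)
    _ ≤ _ := sum_mul_sq_le_sq_mul_sq _ _ _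
  rw [njRatio_eq, njRatio_eq, hSg, ← hSdef, div_mul_div_comm, ← sq, one_le_div (by positivity)]
  exact hCS

end NJRatio

theorem stmt_8_general (X : Type*) [NormedAddCommGroup X] [NormedSpace ℝ X]
    [Nontrivial X] (n : ℕ) :
    lowerNJ X n ≥ 1 / upperNJ (StrongDual ℝ X) n := by
  obtain ⟨x, hx⟩ := exists_ne (0 : X)
  refine le_csInf ⟨_, x, 0, by simp [hx], rfl⟩ ?_
  rintro _ ⟨x0, y, hS, rfl⟩
  obtain ⟨g0, hg0, hg0x⟩ := exists_dual_norm_eq_apply_eq_sq x0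
  choose g hg hgy using fun j => exists_dual_norm_eq_apply_eq_sq (y j)
  have hSg : 0 < ‖g0‖ ^ 2 + ∑ j, ‖g j‖ ^ 2 := by simpa only [hg0, hg] using hS
  have hone : 1 ≤ upperNJ (StrongDual ℝ X) n * njRatio x0 y :=
    (one_le_njRatio_mul_njRatio hS hg0 hg hg0x hgy).trans
      (mul_le_mul_of_nonneg_right (njRatio_le_upperNJ hSg) (njRatio_nonneg x0 y))
  have hC : 0 < upperNJ (StrongDual ℝ X) n :=
    pos_of_mul_pos_left (one_pos.trans_le hone) (njRatio_nonneg x0 y)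
  exact (div_le_iff₀' hC).mpr hone

theorem stmt_8 (X : Type*) [NormedAddCommGroup X] [NormedSpace ℝ X] [CompleteSpace X]
    [Nontrivial X] (n : ℕ) (hn : 2 ≤ n) :
    lowerNJ X n ≥ 1 / upperNJ (StrongDual ℝ X) n :=
  stmt_8_general X n
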